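/- Let (m_k)_{k≥0} be a real sequence with m_0 = 1, let (a_k) and (W_n) be as in the context, and set b_n = Σ_{k=0}^n (n choose k)·k·m_k·a_{n−k}. Then for every n ≥ 0 the Wick polynomial W_n satisfies the differential equation n·W_n(x) − (x − m_1)·W_n′(x) + Σ_{k=2}^n (b_k/k!)·W_n^{(k)}(x) = 0, as an identity in ℝ[x], where W_n^{(k)} denotes the k-th formal derivative. -/

import Mathlib

/-!
With `M = Σ mₖ tᵏ/k!` and `A = Σ aₖ tᵏ/k!`, the recursion says `M A = 1`, and `b` has
exponential generating function `t M' A`. Differentiating `M A = 1` gives `A' = -M' A²`, that is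
`N a_N + Σₖ C(N,k) bₖ a_{N-k} = 0` for every `N`. The coefficient of `x^j` in `W_n^{(k)}/k!` is
`C(n,j) C(n-j,k) a_{n-j-k}`, so, as `b₀ = 0` and `b₁ = m₁`, the coefficient of `x^j` in the
differential equation is `C(n,j)` times that identity at `N = n - j`.
-/

open Finset Nat Polynomial

def binomConv {R : Type*} [CommSemiring R] (f g : ℕ → R) (n : ℕ) : R :=
  ∑ k ∈ range (n + 1), (n.choose k : R) * f k * g (n - k)

theorem sum_range_choose_mul_eq_binomConv {R : Type*} [CommSemiring R] (f g : ℕ → R) {N M : ℕ}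
    (h : N ≤ M) :
    ∑ k ∈ range (M + 1), (N.choose k : R) * f k * g (N - k) = binomConv f g N := by
  refine (sum_subset (range_subset_range.2 (by omega)) fun k _ hk => ?_).symm
  rw [Nat.choose_eq_zero_of_lt (by simpa using hk)]
  simp

section Egf

variable {K : Type*} [Field K]

noncomputable def egf (f : ℕ → K) : PowerSeries K :=
  PowerSeries.mk fun n => f n / n !

theorem coeff_egf (f : ℕ → K) (n : ℕ) : PowerSeries.coeff n (egf f) = f n / n ! :=
  PowerSeries.coeff_mk _ _

variable [CharZero K]

theorem egf_binomConv (f g : ℕ → K) : egf (binomConv f g) = egf f * egf g := by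
  ext n
  rw [PowerSeries.coeff_mul, Nat.sum_antidiagonal_eq_sum_range_succ_mk, coeff_egf, binomConv,
    sum_div]
  refine sum_congr rfl fun k hk => ?_
  have hkn := Nat.le_of_lt_succ (mem_range.1 hk)
  have hchoose : (n.choose k : K) ≠ 0 := Nat.cast_ne_zero.2 (Nat.choose_pos hkn).ne'
  simp only [coeff_egf]
  rw [← Nat.choose_mul_factorial_mul_factorial hkn]
  push_cast
  field_simp

theorem egf_natCast_mul (f : ℕ → K) :
    egf (fun n => n * f n) = PowerSeries.X * PowerSeries.derivative K (egf f) := by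
  ext (_ | n)
  · simp [coeff_egf]
  · rw [PowerSeries.coeff_succ_X_mul, PowerSeries.coeff_derivative, coeff_egf, coeff_egf,
      Nat.factorial_succ]
    push_cast
    field_simp

theorem egf_ite_zero : egf (fun n => if n = 0 then (1 : K) else 0) = 1 := by
  ext n
  rw [coeff_egf, PowerSeries.coeff_one]
  split_ifs with h <;> simp [h]

theorem natCast_mul_add_binomConv_eq_zero {m a : ℕ → K}
    (h : binomConv m a = fun n => if n = 0 then 1 else 0) (n : ℕ) :
    n * a n + binomConv (binomConv (fun k => k * m k) a) a n = 0 := by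
  set D := PowerSeries.derivative K
  have hMA : egf m * egf a = 1 := by rw [← egf_binomConv, h, egf_ite_zero]
  have hD : egf m * D (egf a) + egf a * D (egf m) = 0 := by
    simpa [D, PowerSeries.derivative_one] using congrArg D hMA
  have hsum : egf (fun n => n * a n) + egf (binomConv (binomConv (fun k => k * m k) a) a) = 0 := by
    rw [egf_binomConv, egf_binomConv, egf_natCast_mul, egf_natCast_mul]
    linear_combination (-PowerSeries.X * D (egf a)) * hMA + (PowerSeries.X * egf a) * hD
  have := congrArg (PowerSeries.coeff n) hsum
  simpa [coeff_egf, ← add_div, Nat.factorial_ne_zero] using this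

end Egf

section Wick

variable {R : Type*} [CommRing R]

noncomputable def wickPoly (a : ℕ → R) (n : ℕ) : R[X] :=
  ∑ k ∈ range (n + 1), C ((n.choose k : R) * a k) * X ^ (n - k)

theorem coeff_wickPoly (a : ℕ → R) (n j : ℕ) :
    (wickPoly a n).coeff j = n.choose j * a (n - j) := by
  simp only [wickPoly, finsetSum_coeff, coeff_C_mul_X_pow]
  rcases le_or_gt j n with hj | hj
  · rw [sum_eq_single_of_mem (n - j) (by simp), if_pos (by omega), Nat.choose_symm hj]
    intro k hk hne
    exact if_neg (by have := mem_range.1 hk; omega)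
  · rw [Nat.choose_eq_zero_of_lt hj, Nat.cast_zero, zero_mul]
    exact sum_eq_zero fun k hk => if_neg (by have := mem_range.1 hk; omega)

theorem coeff_hasseDeriv_wickPoly (a : ℕ → R) (n k j : ℕ) :
    (hasseDeriv k (wickPoly a n)).coeff j = n.choose j * (n - j).choose k * a (n - j - k) := by
  have h := Nat.choose_mul (n := n) (Nat.le_add_right j k)
  rw [Nat.add_sub_cancel_left] at h
  rw [hasseDeriv_coeff, coeff_wickPoly, ← Nat.choose_symm_add, ← mul_assoc, ← Nat.cast_mul,
    mul_comm ((j + k).choose j), h, Nat.sub_sub]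
  push_cast
  ring

theorem coeff_X_mul_derivative (p : R[X]) (j : ℕ) :
    (X * derivative p).coeff j = j * p.coeff j := by
  cases j with
  | zero => simp
  | succ j => rw [coeff_X_mul, coeff_derivative]; push_cast; ring

theorem wickPoly_ode_hasseDeriv {a b : ℕ → R} (hab : ∀ N : ℕ, N * a N + binomConv b a N = 0)
    (n : ℕ) :
    C (n : R) * wickPoly a n - X * derivative (wickPoly a n) +
      ∑ k ∈ range (n + 1), C (b k) * hasseDeriv k (wickPoly a n) = 0 := by
  ext j
  simp only [coeff_add, coeff_sub, coeff_C_mul, coeff_X_mul_derivative, finsetSum_coeff,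
    coeff_hasseDeriv_wickPoly, coeff_wickPoly, coeff_zero]
  rcases le_or_gt j n with hj | hj
  · have hconv := sum_range_choose_mul_eq_binomConv b a (Nat.sub_le n j)
    have hN : ((n - j : ℕ) : R) = n - j := Nat.cast_sub hj
    have hsum : ∑ k ∈ range (n + 1), b k * (n.choose j * (n - j).choose k * a (n - j - k)) =
        n.choose j * binomConv b a (n - j) := by
      rw [← hconv, mul_sum]
      exact sum_congr rfl fun _ _ => by ring
    rw [hsum]
    linear_combination (n.choose j : R) * hab (n - j) - (n.choose j * a (n - j)) * hN
  · simp [Nat.choose_eq_zero_of_lt hj]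

end Wick

section WickField

variable {K : Type*} [Field K] [CharZero K]

theorem C_div_factorial_mul_iterate_derivative (c : K) (k : ℕ) (p : K[X]) :
    C (c / k !) * derivative^[k] p = C c * hasseDeriv k p := by
  rw [← factorial_smul_hasseDeriv, LinearMap.smul_apply, nsmul_eq_mul, ← mul_assoc,
    ← C_eq_natCast, ← C_mul, div_mul_cancel₀ c (Nat.cast_ne_zero.2 k.factorial_ne_zero)]

theorem wickPoly_ode {a b : ℕ → K}
    (hab : ∀ N : ℕ, N * a N + binomConv b a N = 0) (hb0 : b 0 = 0) {n : ℕ} (hn : 1 ≤ n) :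
    C (n : K) * wickPoly a n - (X - C (b 1)) * derivative (wickPoly a n) +
      ∑ k ∈ Icc 2 n, C (b k / k !) * derivative^[k] (wickPoly a n) = 0 := by
  have hsplit : ∑ k ∈ range (n + 1), C (b k) * hasseDeriv k (wickPoly a n) =
      C (b 1) * derivative (wickPoly a n) +
        ∑ k ∈ Icc 2 n, C (b k / k !) * derivative^[k] (wickPoly a n) := by
    rw [range_eq_Ico, sum_eq_sum_Ico_succ_bot (by omega), sum_eq_sum_Ico_succ_bot (by omega), hb0,
      C_0, zero_mul, zero_add, hasseDeriv_one']
    simp only [C_div_factorial_mul_iterate_derivative]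
    rfl
  linear_combination wickPoly_ode_hasseDeriv hab n - hsplit

end WickField

/-- With `(a k)` defined from `(m k)` by `a 0 = 1` and
`∑_{k≤n} (n choose k) m k a (n-k) = 0` for `n ≥ 1`, the Wick polynomials
`W n = ∑_{k≤n} (n choose k) a k x^(n-k)` satisfy the differential equation
`n·W n - (x - m 1)·W n' + ∑_{k=2}^n (b k / k!)·W n^(k) = 0`, where
`b n = ∑_{k≤n} (n choose k) k m k a (n-k)` and `W n^(k)` is the `k`-th formal
derivative. -/
theorem stmt_9 (m : ℕ → ℝ) (hm0 : m 0 = 1)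
    (a : ℕ → ℝ) (ha0 : a 0 = 1)
    (ha : ∀ n : ℕ, 1 ≤ n →
      ∑ k ∈ Finset.range (n + 1), (n.choose k : ℝ) * m k * a (n - k) = 0)
    (W : ℕ → Polynomial ℝ)
    (hW : ∀ n, W n =
      ∑ k ∈ Finset.range (n + 1),
        Polynomial.C ((n.choose k : ℝ) * a k) * Polynomial.X ^ (n - k))
    (b : ℕ → ℝ)
    (hb : ∀ n, b n =
      ∑ k ∈ Finset.range (n + 1), (n.choose k : ℝ) * k * m k * a (n - k)) :
    ∀ n : ℕ,
      Polynomial.C (n : ℝ) * W n -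
        (Polynomial.X - Polynomial.C (m 1)) * Polynomial.derivative (W n) +
        ∑ k ∈ Finset.Icc 2 n,
          Polynomial.C (b k / (k.factorial : ℝ)) *
            (Polynomial.derivative^[k] (W n)) = 0 := by
  have hma : binomConv m a = fun n => if n = 0 then 1 else 0 := by
    funext n
    rcases n.eq_zero_or_pos with rfl | hn
    · simp [binomConv, hm0, ha0]
    · exact (ha n hn).trans (if_neg hn.ne').symm
  have hab : ∀ N : ℕ, N * a N + binomConv b a N = 0 := by
    have hb' : b = binomConv (fun k => k * m k) a := funext fun n => by
      simp only [hb, binomConv, mul_assoc]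
    exact hb' ▸ natCast_mul_add_binomConv_eq_zero hma
  have hb1 : b 1 = m 1 := by simp [hb, sum_range_succ, ha0]
  intro n
  rcases n.eq_zero_or_pos with rfl | hn
  · simp [hW]
  rw [← hb1, show W n = wickPoly a n from hW n]
  exact wickPoly_ode hab (by simp [hb]) hn
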